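/- arXiv:0902.1590 — 2 statements merged into one kernel-verified Lean document; each statement's English description precedes it below -/
import Mathlib

section
/- The cooperative optimization update map has a fixed point: there exist probability distributions p₁*,…,pₙ* on finite sets X₁,…,Xₙ such that for each i, pᵢ*(xᵢ) is proportional to (Σ_{x_{∼i}} e^{-Eᵢ(x)/ℏ} Π_{j≠i} pⱼ*(xⱼ))^α, where the sum ranges over all assignments to the variables other than xᵢ. (This follows from the Brouwer fixed point theorem applied to the continuous self-map on the compact convex product of probability simplices.) -/
open Metric Set MeasureTheory
open scoped RealInnerProductSpace

namespace BrouwerMilnor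

variable {E : Type*} [NormedAddCommGroup E] [InnerProductSpace ℝ E]

variable (f : E → E)

/-- direction vector -/
noncomputable def dd (x : E) : E := x - f x
/-- inner product of x with direction -/
noncomputable def bb (x : E) : ℝ := ⟪x, dd f x⟫
/-- discriminant -/
noncomputable def disc (x : E) : ℝ := bb f x ^ 2 + ‖dd f x‖ ^ 2 * (1 - ‖x‖ ^ 2)
/-- scalar root -/
noncomputable def ss (x : E) : ℝ := (-bb f x + Real.sqrt (disc f x)) / ‖dd f x‖ ^ 2
/-- the retraction candidate -/
noncomputable def rr (x : E) : E := x + ss f x • dd f x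
/-- good open region -/
def UU : Set E := {x | dd f x ≠ 0 ∧ 0 < disc f x}

variable {f}

theorem isOpen_UU (hf : Continuous f) : IsOpen (UU f) := by
  have hd : Continuous (dd f) := continuous_id.sub hf
  have hb : Continuous (bb f) := continuous_id.inner hd
  have hdisc : Continuous (disc f) :=
    ((hb.pow 2).add (((hd.norm.pow 2)).mul (continuous_const.sub (continuous_norm.pow 2))))
  exact ((isOpen_compl_iff.2 (isClosed_singleton.preimage hd)).inter
    (isOpen_Ioi.preimage hdisc))

theorem ball_subset_UU (hmaps : MapsTo f (closedBall 0 1) (closedBall 0 1))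
    (hno : ∀ x ∈ closedBall (0:E) 1, f x ≠ x) :
    closedBall (0:E) 1 ⊆ UU f := by
  intro x hx
  have hxn : ‖x‖ ≤ 1 := by simpa [dist_eq_norm] using hx
  have hfx : ‖f x‖ ≤ 1 := by simpa [dist_eq_norm] using hmaps hx
  have hd : dd f x ≠ 0 := by
    simp only [dd, sub_ne_zero]
    exact fun h => hno x hx h.symm
  refine ⟨hd, ?_⟩
  rcases lt_or_eq_of_le hxn with h1 | h1
  · have h2 : 0 < ‖dd f x‖ ^ 2 * (1 - ‖x‖ ^ 2) := by
      apply mul_pos (pow_pos (norm_pos_iff.mpr hd) 2)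
      nlinarith [norm_nonneg x]
    have hb2 : (0:ℝ) ≤ bb f x ^ 2 := sq_nonneg _
    simp only [disc]; linarith
  · -- ‖x‖ = 1 : show bb f x ≠ 0
    have hb : bb f x ≠ 0 := by
      intro h0
      have hxfx : ⟪x, f x⟫ = 1 := by
        have h3 : ⟪x, x⟫ - ⟪x, f x⟫ = 0 := by
          simpa [bb, dd, inner_sub_right] using h0
        have hxx : ⟪x, x⟫ = 1 := by
          rw [real_inner_self_eq_norm_sq, h1]; norm_num
        linarith
      have h4 : ‖x - f x‖ ^ 2 ≤ 0 := by
        rw [norm_sub_sq_real, hxfx, h1]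
        nlinarith [hfx, norm_nonneg (f x)]
      have h5 : dd f x = 0 := by
        have h6 : ‖x - f x‖ ^ 2 = 0 := le_antisymm h4 (by positivity)
        have : ‖x - f x‖ = 0 := by
          have := pow_eq_zero_iff (n := 2) (by norm_num) |>.mp h6
          exact this
        simpa [dd] using norm_eq_zero.mp this
      exact hd h5
    have h7 : 0 < bb f x ^ 2 := by positivity
    have h8 : 1 - ‖x‖ ^ 2 = 0 := by rw [h1]; ring
    simp only [disc, h8, mul_zero, add_zero]
    exact h7

theorem contDiff_dd (hf : ContDiff ℝ (⊤ : ℕ∞) f) : ContDiff ℝ (⊤ : ℕ∞) (dd f) := contDiff_id.sub hf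

theorem contDiff_bb (hf : ContDiff ℝ (⊤ : ℕ∞) f) : ContDiff ℝ (⊤ : ℕ∞) (bb f) :=
  contDiff_id.inner ℝ (contDiff_dd hf)

theorem contDiff_normsq_dd (hf : ContDiff ℝ (⊤ : ℕ∞) f) :
    ContDiff ℝ (⊤ : ℕ∞) (fun x => ‖dd f x‖ ^ 2) := by
  have h : (fun x : E => ‖dd f x‖ ^ 2) = fun x => ⟪dd f x, dd f x⟫ :=
    funext fun x => (real_inner_self_eq_norm_sq _).symm
  rw [h]
  exact (contDiff_dd hf).inner ℝ (contDiff_dd hf)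

theorem contDiff_disc (hf : ContDiff ℝ (⊤ : ℕ∞) f) : ContDiff ℝ (⊤ : ℕ∞) (disc f) := by
  have h : (fun x : E => ‖x‖ ^ 2) = fun x : E => ⟪x, x⟫ :=
    funext fun x => (real_inner_self_eq_norm_sq _).symm
  exact ((contDiff_bb hf).pow 2).add
    ((contDiff_normsq_dd hf).mul (contDiff_const.sub (by rw [h]; exact contDiff_id.inner ℝ contDiff_id)))

theorem contDiffOn_rr (hf : ContDiff ℝ (⊤ : ℕ∞) f) : ContDiffOn ℝ (⊤ : ℕ∞) (rr f) (UU f) := by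
  intro x hx
  obtain ⟨hd, hdisc⟩ := hx
  apply ContDiffAt.contDiffWithinAt
  have hsqrt : ContDiffAt ℝ (⊤ : ℕ∞) (fun y => Real.sqrt (disc f y)) x :=
    (Real.contDiffAt_sqrt (ne_of_gt hdisc)).comp x (contDiff_disc hf).contDiffAt
  have hss : ContDiffAt ℝ (⊤ : ℕ∞) (ss f) x := by
    apply ContDiffAt.div
    · exact ((contDiff_bb hf).contDiffAt.neg).add hsqrt
    · exact (contDiff_normsq_dd hf).contDiffAt
    · exact pow_ne_zero 2 (norm_ne_zero_iff.mpr hd)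
  exact contDiffAt_id.add (hss.smul (contDiff_dd hf).contDiffAt)

theorem norm_rr {x : E} (hx : x ∈ UU f) : ‖rr f x‖ = 1 := by
  obtain ⟨hd, hdisc⟩ := hx
  have hD : ‖dd f x‖ ^ 2 ≠ 0 := pow_ne_zero 2 (norm_ne_zero_iff.mpr hd)
  have hsq : Real.sqrt (disc f x) ^ 2 = disc f x := Real.sq_sqrt hdisc.le
  have hexp : ‖rr f x‖ ^ 2 = ‖x‖ ^ 2 + 2 * (ss f x * bb f x) + ss f x ^ 2 * ‖dd f x‖ ^ 2 := by
    rw [rr, norm_add_sq_real, real_inner_smul_right, norm_smul]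
    simp only [Real.norm_eq_abs, mul_pow, sq_abs, bb]
  have hsq' : Real.sqrt (disc f x) ^ 2 = bb f x ^ 2 + ‖dd f x‖ ^ 2 * (1 - ‖x‖ ^ 2) := hsq
  have h1 : ‖rr f x‖ ^ 2 = 1 := by
    rw [hexp, ss]
    field_simp
    linear_combination hsq'
  calc ‖rr f x‖ = Real.sqrt (‖rr f x‖ ^ 2) := (Real.sqrt_sq (norm_nonneg _)).symm
  _ = 1 := by rw [h1, Real.sqrt_one]

theorem rr_eq_self {x : E} (hx : x ∈ UU f) (h1 : ‖x‖ = 1) (hb : 0 ≤ bb f x) :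
    rr f x = x := by
  have hdisc : disc f x = bb f x ^ 2 := by
    simp [disc, h1]
  have : ss f x = 0 := by
    rw [ss, hdisc, Real.sqrt_sq hb]
    simp
  simp [rr, this]

theorem det_eq_zero_of_maps_to_sphere {F : Type*} [NormedAddCommGroup F]
    [InnerProductSpace ℝ F] [FiniteDimensional ℝ F]
    {r : F → F} {x : F} {B' : F →L[ℝ] F} (hr : HasFDerivAt r B' x)
    (hloc : ∀ᶠ y in nhds x, ‖r y‖ = 1) : B'.det = 0 := by
  by_contra hdet
  have hinner : HasFDerivAt (fun y => ⟪r y, r y⟫)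
      ((fderivInnerCLM ℝ (r x, r x)).comp (B'.prod B')) x := hr.inner ℝ hr
  have hconst : HasFDerivAt (fun y => ⟪r y, r y⟫) (0 : F →L[ℝ] ℝ) x := by
    have hev : (fun y => (1:ℝ)) =ᶠ[nhds x] fun y => ⟪r y, r y⟫ := by
      filter_upwards [hloc] with y hy
      rw [real_inner_self_eq_norm_sq, hy]; norm_num
    exact (hasFDerivAt_const (1:ℝ) x).congr_of_eventuallyEq hev.symm
  have huniq := hinner.unique hconst
  have hzero : ∀ w, ⟪B' w, r x⟫ = 0 := by
    intro w
    have h0 : ((fderivInnerCLM ℝ (r x, r x)).comp (B'.prod B')) w = 0 := by rw [huniq]; rfl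
    simp only [ContinuousLinearMap.comp_apply, ContinuousLinearMap.prod_apply,
      fderivInnerCLM_apply] at h0
    linarith [real_inner_comm (r x) (B' w), h0]
  -- B' is surjective since det ≠ 0
  have hdet' : LinearMap.det (B' : F →ₗ[ℝ] F) ≠ 0 := by
    simpa [ContinuousLinearMap.det] using hdet
  set e := LinearMap.equivOfDetNeZero _ hdet' with he
  obtain ⟨w, hw⟩ : ∃ w, B' w = r x := ⟨e.symm (r x), by
    have : (e : F →ₗ[ℝ] F) (e.symm (r x)) = r x := e.apply_symm_apply (r x)
    simpa [he, LinearMap.equivOfDetNeZero] using this⟩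
  have : ⟪r x, r x⟫ = 0 := by have h2 := hzero w; rw [hw] at h2; exact h2
  have hrx1 : ‖r x‖ = 1 := hloc.self_of_nhds
  rw [real_inner_self_eq_norm_sq, hrx1] at this
  norm_num at this



section P3
open Polynomial

variable {F : Type*} [NormedAddCommGroup F] [InnerProductSpace ℝ F] [FiniteDimensional ℝ F]

theorem mapMatrix_eval {n : Type*} [Fintype n] [DecidableEq n] (A : Matrix n n ℝ) (s : ℝ) :
    (Polynomial.evalRingHom s).mapMatrix ((X : Polynomial ℝ) • A.map C + 1) = s • A + 1 := by
  ext i j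
  simp only [RingHom.mapMatrix_apply, Matrix.map_apply, Matrix.add_apply, Matrix.smul_apply,
    smul_eq_mul, Matrix.one_apply, apply_ite, map_add, map_mul, map_one, map_zero,
    Polynomial.coe_evalRingHom, eval_X, eval_C, eval_one, eval_zero, eval_add, eval_mul]
  split_ifs <;> ring

/-- `t ↦ det (1 + t • M)` is the evaluation of a polynomial of degree < finrank + 1. -/
theorem exists_poly_det (M : F →L[ℝ] F) :
    ∃ q : Polynomial ℝ, q.degree < (Module.finrank ℝ F + 1 : ℕ) ∧
      ∀ s : ℝ, q.eval s = (1 + s • M).det := by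
  classical
  let b := Module.finBasis ℝ F
  let A : Matrix (Fin (Module.finrank ℝ F)) (Fin (Module.finrank ℝ F)) ℝ :=
    LinearMap.toMatrix b b (M : F →ₗ[ℝ] F)
  refine ⟨((X : Polynomial ℝ) • A.map C + 1).det, ?_, ?_⟩
  · have h1 : ((1 : Matrix (Fin (Module.finrank ℝ F)) (Fin (Module.finrank ℝ F)) ℝ).map
        (C : ℝ →+* Polynomial ℝ)) = 1 := Matrix.map_one _ (map_zero C) (map_one C)
    have h2 := Polynomial.natDegree_det_X_add_C_le A
      (1 : Matrix (Fin (Module.finrank ℝ F)) (Fin (Module.finrank ℝ F)) ℝ)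
    rw [h1] at h2
    have h3 : (((X : Polynomial ℝ) • A.map C + 1).det).natDegree ≤ Module.finrank ℝ F := by
      simpa using h2
    calc (((X : Polynomial ℝ) • A.map C + 1).det).degree
        ≤ ((((X : Polynomial ℝ) • A.map C + 1).det).natDegree : WithBot ℕ) :=
          Polynomial.degree_le_natDegree
      _ < ((Module.finrank ℝ F + 1 : ℕ) : WithBot ℕ) := by
          exact_mod_cast Nat.lt_succ_of_le h3
  · intro s
    have hmap := RingHom.map_det (Polynomial.evalRingHom s)
      ((X : Polynomial ℝ) • A.map C + 1)
    simp only [Polynomial.coe_evalRingHom] at hmap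
    rw [hmap]
    have hmat := mapMatrix_eval A s
    rw [hmat]
    have hlin : s • A + 1 = LinearMap.toMatrix b b (((1 + s • M : F →L[ℝ] F) : F →ₗ[ℝ] F)) := by
      simp only [ContinuousLinearMap.coe_add, ContinuousLinearMap.coe_smul, map_add, _root_.map_smul]
      rw [show ((1 : F →L[ℝ] F) : F →ₗ[ℝ] F) = LinearMap.id from rfl, LinearMap.toMatrix_id]
      exact add_comm _ _
    rw [hlin, LinearMap.det_toMatrix]

/-- Lagrange interpolation representation of `det (1 + t • M)`. -/
theorem det_one_add_smul_eq_sum (M : F →L[ℝ] F) (t : ℝ) :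
    (1 + t • M).det =
      ∑ j ∈ Finset.range (Module.finrank ℝ F + 1),
        (1 + (j:ℝ) • M).det *
          (Lagrange.basis (Finset.range (Module.finrank ℝ F + 1)) (fun k : ℕ => (k:ℝ)) j).eval t := by
  classical
  obtain ⟨q, hqdeg, hq⟩ := exists_poly_det M
  have hinj : Set.InjOn (fun k : ℕ => (k:ℝ)) (Finset.range (Module.finrank ℝ F + 1)) :=
    fun a _ b _ h => Nat.cast_injective h
  have hdeg : q.degree < (Finset.range (Module.finrank ℝ F + 1)).card := by
    simpa using hqdeg
  have hrep := Lagrange.eq_interpolate hinj hdeg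
  calc (1 + t • M).det = q.eval t := (hq t).symm
    _ = _ := by
        conv_lhs => rw [hrep]
        rw [Lagrange.interpolate_apply, Polynomial.eval_finset_sum]
        refine Finset.sum_congr rfl fun j hj => ?_
        rw [Polynomial.eval_mul, Polynomial.eval_C, hq]



end P3

open Polynomial Filter

theorem smooth_no_fixed_point_absurd {F : Type*} [NormedAddCommGroup F] [InnerProductSpace ℝ F]
    [FiniteDimensional ℝ F] [MeasurableSpace F] [BorelSpace F] [Nontrivial F]
    (μ : Measure F) [μ.IsAddHaarMeasure]
    {f : F → F} (hf : ContDiff ℝ (⊤ : ℕ∞) f)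
    (hmaps : MapsTo f (closedBall 0 1) (closedBall 0 1))
    (hno : ∀ x ∈ closedBall (0:F) 1, f x ≠ x) : False := by
  classical
  set B : Set F := closedBall 0 1 with hB
  have hBc : IsCompact B := isCompact_closedBall 0 1
  have hBU : B ⊆ UU f := ball_subset_UU hmaps hno
  have hUopen : IsOpen (UU f) := isOpen_UU hf.continuous
  set v : F → F := fun x => rr f x - x with hv
  have hvCD : ContDiffOn ℝ (⊤ : ℕ∞) v (UU f) := (contDiffOn_rr hf).sub contDiffOn_id
  set A : F → F →L[ℝ] F := fun x => fderiv ℝ v x with hA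
  have hvAt : ∀ x ∈ UU f, ContDiffAt ℝ (⊤ : ℕ∞) v x := fun x hx => hvCD.contDiffAt (hUopen.mem_nhds hx)
  have hvd : ∀ x ∈ UU f, HasFDerivAt v (A x) x := fun x hx =>
    ((hvAt x hx).differentiableAt (by simp)).hasFDerivAt
  have hAcont : ContinuousOn A (UU f) := hvCD.continuousOn_fderiv_of_isOpen hUopen (mod_cast le_top)
  have hAcontB : ContinuousOn A B := hAcont.mono hBU
  have hvcont : ContinuousOn v B := (hvCD.continuousOn).mono hBU
  have hBne : B.Nonempty := ⟨0, mem_closedBall_self zero_le_one⟩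
  -- Lipschitz constant
  obtain ⟨x₀, hx₀B, hx₀max⟩ := hBc.exists_isMaxOn hBne (hAcontB.norm)
  set L : ℝ := ‖A x₀‖ with hL
  have hLnonneg : 0 ≤ L := norm_nonneg _
  have hlip : ∀ x ∈ B, ∀ y ∈ B, ‖v x - v y‖ ≤ L * ‖x - y‖ := by
    intro x hx y hy
    exact (convex_closedBall _ _).norm_image_sub_le_of_norm_hasFDerivWithin_le
      (fun z hz => (hvd z (hBU hz)).hasFDerivWithinAt)
      (fun z hz => hx₀max hz) hy hx
  -- determinant positivity for small t
  have hdet_one : ((1 : F →L[ℝ] F)).det = 1 := by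
    simp [ContinuousLinearMap.det, ContinuousLinearMap.one_def]
  obtain ⟨t₀, ht₀pos, ht₀⟩ : ∃ t₀ > (0:ℝ), ∀ t ∈ Icc (0:ℝ) t₀, ∀ x ∈ B,
      (1/2 : ℝ) < (1 + t • A x).det := by
    have hK1 : IsCompact (A '' B) := hBc.image_of_continuousOn hAcontB
    have hdc : Continuous fun q : ℝ × (F →L[ℝ] F) => (1 + q.1 • q.2).det :=
      ContinuousLinearMap.continuous_det.comp
        (continuous_const.add (continuous_fst.smul continuous_snd))
    set Cs : Set (ℝ × (F →L[ℝ] F)) :=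
      (Icc (0:ℝ) 1 ×ˢ (A '' B)) ∩ {q | (1 + q.1 • q.2).det ≤ 1/2} with hCs
    have hCcomp : IsCompact Cs := (isCompact_Icc.prod hK1).inter_right
      (isClosed_le hdc continuous_const)
    rcases Cs.eq_empty_or_nonempty with hCe | hCne
    · refine ⟨1, one_pos, fun t ht x hx => ?_⟩
      by_contra hle
      have hmem : (t, A x) ∈ Cs := ⟨⟨ht, ⟨x, hx, rfl⟩⟩, not_lt.mp hle⟩
      rw [hCe] at hmem
      exact hmem
    · obtain ⟨q, hqC, hqmin⟩ := hCcomp.exists_isMinOn hCne continuous_fst.continuousOn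
      have hq1pos : 0 < q.1 := by
        rcases hqC with ⟨⟨hq1, _⟩, hq2⟩
        rcases lt_or_eq_of_le hq1.1 with h | h
        · exact h
        · exfalso
          simp only [Set.mem_setOf_eq, ← h, zero_smul, add_zero] at hq2
          rw [hdet_one] at hq2
          linarith
      refine ⟨min (q.1/2) 1, lt_min (by linarith) one_pos, fun t ht x hx => ?_⟩
      by_contra hle
      have hmem : (t, A x) ∈ Cs :=
        ⟨⟨⟨ht.1, le_trans ht.2 (min_le_right _ _)⟩, ⟨x, hx, rfl⟩⟩, not_lt.mp hle⟩
      have hge : q.1 ≤ t := hqmin hmem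
      have hle2 : t ≤ q.1/2 := le_trans ht.2 (min_le_left _ _)
      linarith
  set t₂ : ℝ := min t₀ (min (1/(2*(L+1))) (1/2)) with ht₂def
  have ht₂pos : 0 < t₂ := by
    apply lt_min ht₀pos
    apply lt_min _ (by norm_num)
    positivity
  have ht₂lt1 : t₂ < 1 := lt_of_le_of_lt (le_trans (min_le_right _ _) (min_le_right _ _)) (by norm_num)
  set g : ℝ → F → F := fun t x => x + t • v x with hg
  set Dg : ℝ → F → (F →L[ℝ] F) := fun t x => 1 + t • A x with hDg
  have hgderiv : ∀ (t : ℝ), ∀ x ∈ UU f, HasFDerivAt (g t) (Dg t x) x := by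
    intro t x hx
    exact (hasFDerivAt_id x).add ((hvd x hx).const_smul t)
  have hgcont : ∀ t : ℝ, ContinuousOn (g t) B :=
    fun t => continuousOn_id.add (hvcont.const_smul t)
  have hgmaps : ∀ t ∈ Icc (0:ℝ) 1, MapsTo (g t) B B := by
    intro t ht x hx
    have hrx : ‖rr f x‖ = 1 := norm_rr (hBU hx)
    have hxle : ‖x‖ ≤ 1 := by simpa [hB, dist_eq_norm] using hx
    have hgx : g t x = (1-t) • x + t • rr f x := by
      simp only [hg, hv, smul_sub, sub_smul, one_smul]
      abel
    have hle : ‖g t x‖ ≤ 1 := by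
      rw [hgx]
      calc ‖(1-t) • x + t • rr f x‖ ≤ ‖(1-t) • x‖ + ‖t • rr f x‖ := norm_add_le _ _
        _ = (1-t) * ‖x‖ + t * ‖rr f x‖ := by
            rw [norm_smul, norm_smul, Real.norm_eq_abs, Real.norm_eq_abs,
              abs_of_nonneg (by linarith [ht.2]), abs_of_nonneg ht.1]
        _ ≤ (1-t) * 1 + t * 1 := by
            apply add_le_add
            · exact mul_le_mul_of_nonneg_left hxle (by linarith [ht.2])
            · rw [hrx]
        _ = 1 := by ring
    simpa [hB, dist_eq_norm] using hle
  have hginj : ∀ t ∈ Icc (0:ℝ) t₂, Set.InjOn (g t) B := by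
    intro t ht x hx y hy hxy
    simp only [hg] at hxy
    have h2 : x - y = t • v y - t • v x := by
      rw [sub_eq_sub_iff_add_eq_add]
      calc x + t • v x = y + t • v y := hxy
        _ = t • v y + y := by abel
    have h1 : x - y = t • (v y - v x) := by rw [smul_sub]; exact h2
    have h3 : ‖x - y‖ ≤ (t*L) * ‖x - y‖ := by
      calc ‖x - y‖ = ‖t • (v y - v x)‖ := by rw [h1]
        _ = |t| * ‖v y - v x‖ := by rw [norm_smul, Real.norm_eq_abs]
        _ = t * ‖v y - v x‖ := by rw [abs_of_nonneg ht.1]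
        _ ≤ t * (L * ‖y - x‖) := mul_le_mul_of_nonneg_left (hlip y hy x hx) ht.1
        _ = (t*L) * ‖x - y‖ := by rw [norm_sub_rev]; ring
    have htle : t ≤ 1/(2*(L+1)) :=
      le_trans ht.2 (le_trans (min_le_right _ _) (min_le_left _ _))
    have htL : t * L < 1 := by
      have hL1 : (0:ℝ) < L + 1 := by linarith
      calc t * L ≤ (1/(2*(L+1))) * L := mul_le_mul_of_nonneg_right htle hLnonneg
        _ < 1 := by
            rw [div_mul_eq_mul_div, one_mul, div_lt_one (by linarith)]
            linarith
    have hzero : ‖x - y‖ = 0 := by nlinarith [norm_nonneg (x - y)]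
    exact sub_eq_zero.mp (norm_eq_zero.mp hzero)
  have hgsurj : ∀ t ∈ Icc (0:ℝ) t₂, g t '' B = B := by
    intro t ht
    have htIcc1 : t ∈ Icc (0:ℝ) 1 := ⟨ht.1, le_trans ht.2 ht₂lt1.le⟩
    have htlt1 : t < 1 := lt_of_le_of_lt ht.2 ht₂lt1
    apply Subset.antisymm ((hgmaps t htIcc1).image_subset)
    have himgcl : IsClosed (g t '' B) := (hBc.image_of_continuousOn (hgcont t)).isClosed
    have hsphere_fix : ∀ x ∈ B, ‖x‖ = 1 → g t x = x := by
      intro x hx h1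
      have hfx : ‖f x‖ ≤ 1 := by simpa [hB, dist_eq_norm] using hmaps hx
      have hip : ⟪x, f x⟫ ≤ 1 := by
        have h3 := real_inner_le_norm x (f x)
        rw [h1, one_mul] at h3
        linarith
      have hbb : bb f x = 1 - ⟪x, f x⟫ := by
        simp [bb, dd, inner_sub_right, real_inner_self_eq_norm_sq, h1]
      have hb : 0 ≤ bb f x := by rw [hbb]; linarith
      have hrfix : rr f x = x := rr_eq_self (hBU hx) h1 hb
      simp [hg, hv, hrfix]
    have hball : ball (0:F) 1 ⊆ g t '' B := by
      have hWopen : IsOpen (g t '' B ∩ ball (0:F) 1) := by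
        rw [isOpen_iff_mem_nhds]
        rintro y ⟨⟨x, hxB, rfl⟩, hyball⟩
        have hxle : ‖x‖ ≤ 1 := by simpa [hB, dist_eq_norm] using hxB
        have hxlt : ‖x‖ < 1 := by
          rcases lt_or_eq_of_le hxle with h | h
          · exact h
          · exfalso
            rw [hsphere_fix x hxB h] at hyball
            rw [mem_ball, dist_eq_norm, sub_zero, h] at hyball
            exact lt_irrefl _ hyball
        have hxU : x ∈ UU f := hBU hxB
        have hcd : ContDiffAt ℝ (⊤ : ℕ∞) (g t) x := by
          have : ContDiffAt ℝ (⊤ : ℕ∞) (fun y => y + t • v y) x :=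
            contDiffAt_id.add ((hvAt x hxU).const_smul t)
          exact this
        have hstrict : HasStrictFDerivAt (g t) (fderiv ℝ (g t) x) x :=
          hcd.hasStrictFDerivAt (by simp)
        have hfd : fderiv ℝ (g t) x = Dg t x := (hgderiv t x hxU).fderiv
        rw [hfd] at hstrict
        have hdetpos : (1/2:ℝ) < (Dg t x).det :=
          ht₀ t ⟨ht.1, le_trans ht.2 (min_le_left _ _)⟩ x hxB
        have hdet' : LinearMap.det ((Dg t x : F →L[ℝ] F) : F →ₗ[ℝ] F) ≠ 0 := by
          have hh : (Dg t x).det = LinearMap.det ((Dg t x : F →L[ℝ] F) : F →ₗ[ℝ] F) := rfl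
      
          rw [← hh]
          linarith
        set eC : F ≃L[ℝ] F :=
          (LinearMap.equivOfDetNeZero _ hdet').toContinuousLinearEquiv with heCdef
        have heC : (eC : F →L[ℝ] F) = Dg t x := by
          ext w
          simp only [heCdef]
          simp [LinearMap.equivOfDetNeZero, LinearEquiv.coe_toContinuousLinearEquiv',
            LinearEquiv.coe_ofIsUnitDet]
        have hstrict' : HasStrictFDerivAt (g t) (eC : F →L[ℝ] F) x := by
          rw [heC]; exact hstrict
        have hmapnhds := hstrict'.map_nhds_eq_of_equiv
        have hBnhds : B ∈ nhds x :=
          closedBall_mem_nhds_of_mem (by simpa [mem_ball, dist_eq_norm] using hxlt)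
        have h1 : g t '' B ∈ nhds (g t x) := by
          rw [← hmapnhds]
          exact Filter.image_mem_map hBnhds
        exact Filter.inter_mem h1 (isOpen_ball.mem_nhds hyball)
      by_contra hnot
      rw [not_subset] at hnot
      obtain ⟨y, hyball, hynot⟩ := hnot
      have hpre : IsPreconnected (ball (0:F) 1) := (convex_ball 0 1).isPreconnected
      have h0img : g t 0 ∈ g t '' B := mem_image_of_mem _ (mem_closedBall_self zero_le_one)
      have h0ball : g t 0 ∈ ball (0:F) 1 := by
        have : g t 0 = t • rr f 0 := by simp [hg, hv]
        rw [mem_ball, dist_eq_norm, sub_zero, this, norm_smul, Real.norm_eq_abs,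
          abs_of_nonneg ht.1, norm_rr (hBU (mem_closedBall_self zero_le_one))]
        simpa using htlt1
      have hcontra := hpre (g t '' B ∩ ball (0:F) 1) ((g t '' B)ᶜ) hWopen
        himgcl.isOpen_compl
        (fun z hz => by
          by_cases hzi : z ∈ g t '' B
          · exact Or.inl ⟨hzi, hz⟩
          · exact Or.inr hzi)
        ⟨g t 0, h0ball, h0img, h0ball⟩
        ⟨y, hyball, hynot⟩
      obtain ⟨z, _, ⟨hz1, _⟩, hz2⟩ := hcontra
      exact hz2 hz1
    calc B = closure (ball (0:F) 1) := (closure_ball (0:F) one_ne_zero).symm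
      _ ⊆ closure (g t '' B) := closure_mono hball
      _ = g t '' B := himgcl.closure_eq
  -- change of variables
  set P : ℝ → ℝ := fun t => ∫ x in B, (Dg t x).det ∂μ with hP
  have hdetcont : ∀ t : ℝ, ContinuousOn (fun x => (Dg t x).det) B := by
    intro t
    exact ContinuousLinearMap.continuous_det.comp_continuousOn
      (continuousOn_const.add (hAcontB.const_smul t))
  have hmeasB : MeasurableSet B := measurableSet_closedBall
  have hPt : ∀ t ∈ Icc (0:ℝ) t₂, P t = (μ B).toReal := by
    intro t ht
    have hdets : ∀ x ∈ B, (1/2:ℝ) < (Dg t x).det :=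
      fun x hx => ht₀ t ⟨ht.1, le_trans ht.2 (min_le_left _ _)⟩ x hx
    have hcov := lintegral_abs_det_fderiv_eq_addHaar_image μ hmeasB
      (fun x hx => ((hgderiv t x (hBU hx))).hasFDerivWithinAt) (hginj t ht)
    rw [hgsurj t ht] at hcov
    have hint : IntegrableOn (fun x => (Dg t x).det) B μ :=
      (hdetcont t).integrableOn_compact hBc
    have hnn : 0 ≤ᵐ[μ.restrict B] fun x => (Dg t x).det := by
      filter_upwards [ae_restrict_mem hmeasB] with x hx
      simp only [Pi.zero_apply]
      linarith [hdets x hx]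
    have heq : ENNReal.ofReal (P t) = ∫⁻ x in B, ENNReal.ofReal ((Dg t x).det) ∂μ :=
      ofReal_integral_eq_lintegral_ofReal hint hnn
    have habs : (∫⁻ x in B, ENNReal.ofReal |(Dg t x).det| ∂μ)
        = ∫⁻ x in B, ENNReal.ofReal ((Dg t x).det) ∂μ := by
      apply lintegral_congr_ae
      filter_upwards [ae_restrict_mem hmeasB] with x hx
      rw [abs_of_pos (by linarith [hdets x hx])]
    have hfin : ENNReal.ofReal (P t) = μ B := by rw [heq, ← habs, hcov]
    rw [← hfin, ENNReal.toReal_ofReal]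
    exact setIntegral_nonneg hmeasB (fun x hx => by linarith [hdets x hx])
  -- polynomial representation
  set N : ℕ := Module.finrank ℝ F with hN
  set w : ℕ → Polynomial ℝ :=
    fun j => Lagrange.basis (Finset.range (N + 1)) (fun k : ℕ => (k:ℝ)) j with hw
  set Q : Polynomial ℝ := ∑ j ∈ Finset.range (N+1), Polynomial.C (P j) * w j with hQ
  have hPQ : ∀ t : ℝ, P t = Q.eval t := by
    intro t
    have hint : ∀ j : ℕ, IntegrableOn (fun x => (Dg (j:ℝ) x).det) B μ :=
      fun j => (hdetcont _).integrableOn_compact hBc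
    have hrepr : ∀ x : F, (Dg t x).det
        = ∑ j ∈ Finset.range (N+1), (Dg (j:ℝ) x).det * (w j).eval t := by
      intro x
      simpa [hDg, hw, hN] using det_one_add_smul_eq_sum (A x) t
    calc P t = ∫ x in B,
          (∑ j ∈ Finset.range (N+1), (Dg (j:ℝ) x).det * (w j).eval t) ∂μ := by
          simp only [hP]
          exact integral_congr_ae (Eventually.of_forall fun x => hrepr x)
      _ = ∑ j ∈ Finset.range (N+1), ∫ x in B, (Dg (j:ℝ) x).det * (w j).eval t ∂μ :=
          integral_finset_sum _ (fun j _ => ((hint j).mul_const _))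
      _ = ∑ j ∈ Finset.range (N+1), (∫ x in B, (Dg (j:ℝ) x).det ∂μ) * (w j).eval t := by
          refine Finset.sum_congr rfl fun j _ => ?_
          exact integral_mul_const _ _
      _ = Q.eval t := by
          rw [hQ, Polynomial.eval_finset_sum]
          refine Finset.sum_congr rfl fun j _ => ?_
          rw [Polynomial.eval_mul, Polynomial.eval_C]
  -- value at 1
  have hP1 : P 1 = 0 := by
    have hzero : ∀ x ∈ B, (Dg 1 x).det = 0 := by
      intro x hx
      have hxU := hBU hx
      have hgr : g 1 = rr f := funext fun y => by simp [hg, hv]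
      have hr : HasFDerivAt (rr f) (Dg 1 x) x := by
        have h := hgderiv 1 x hxU
        rwa [hgr] at h
      apply det_eq_zero_of_maps_to_sphere hr
      filter_upwards [hUopen.mem_nhds hxU] with y hy
      exact norm_rr hy
    have : P 1 = ∫ x in B, (0:ℝ) ∂μ := by
      simp only [hP]
      exact setIntegral_congr_fun hmeasB (fun x hx => hzero x hx)
    rw [this, integral_zero]
  -- conclude
  have hμpos : 0 < (μ B).toReal :=
    ENNReal.toReal_pos (measure_closedBall_pos μ 0 one_pos).ne' hBc.measure_lt_top.ne
  have hconst : Q = Polynomial.C ((μ B).toReal) := by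
    apply Polynomial.eq_of_infinite_eval_eq
    apply Set.Infinite.mono (s := Icc (0:ℝ) t₂)
    · intro t ht
      simp only [Set.mem_setOf_eq, Polynomial.eval_C]
      rw [← hPQ t]
      exact hPt t ht
    · exact Set.infinite_coe_iff.1 (Set.Icc.infinite ht₂pos)
  have : (0:ℝ) = (μ B).toReal := by
    calc (0:ℝ) = P 1 := hP1.symm
      _ = Q.eval 1 := hPQ 1
      _ = (μ B).toReal := by rw [hconst, Polynomial.eval_C]
  linarith

section Approx

theorem exists_smooth_approx {m : ℕ} {f : EuclideanSpace ℝ (Fin m) → EuclideanSpace ℝ (Fin m)}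
    (hf : ContinuousOn f (closedBall 0 1)) {ε : ℝ} (hε : 0 < ε) :
    ∃ H : EuclideanSpace ℝ (Fin m) → EuclideanSpace ℝ (Fin m), ContDiff ℝ (⊤ : ℕ∞) H ∧
      ∀ x ∈ closedBall (0:EuclideanSpace ℝ (Fin m)) 1, ‖H x - f x‖ ≤ ε := by
  classical
  set K : Set (EuclideanSpace ℝ (Fin m)) := closedBall 0 1 with hK
  have hKc : IsCompact K := isCompact_closedBall _ _
  haveI : CompactSpace K := isCompact_iff_compactSpace.mp hKc
  -- the subalgebra of restrictions of smooth functions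
  set SA : Subalgebra ℝ C(K, ℝ) :=
    { carrier := {φ | ∃ H : EuclideanSpace ℝ (Fin m) → ℝ,
        ContDiff ℝ (⊤ : ℕ∞) H ∧ ∀ x : K, φ x = H x}
      mul_mem' := fun {a b} ha hb => by
        obtain ⟨Ha, hHa, ha'⟩ := ha
        obtain ⟨Hb, hHb, hb'⟩ := hb
        exact ⟨Ha * Hb, hHa.mul hHb, fun x => by simp [ha' x, hb' x]⟩
      add_mem' := fun {a b} ha hb => by
        obtain ⟨Ha, hHa, ha'⟩ := ha
        obtain ⟨Hb, hHb, hb'⟩ := hb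
        exact ⟨Ha + Hb, hHa.add hHb, fun x => by simp [ha' x, hb' x]⟩
      algebraMap_mem' := fun r =>
        ⟨fun _ => r, contDiff_const, fun x => rfl⟩ } with hSA
  have hsep : SA.SeparatesPoints := by
    intro x y hxy
    have hvy : (x : EuclideanSpace ℝ (Fin m)) ≠ (y : EuclideanSpace ℝ (Fin m)) :=
      Subtype.coe_injective.ne hxy
    have hex : ∃ i, (x : EuclideanSpace ℝ (Fin m)) i ≠ (y : EuclideanSpace ℝ (Fin m)) i := by
      by_contra hcon
      push_neg at hcon
      exact hvy (PiLp.ext hcon)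
    obtain ⟨i, hi⟩ := hex
    set φ : C(K, ℝ) := ⟨fun z : K => (z : EuclideanSpace ℝ (Fin m)) i,
      (continuous_apply i).comp ((PiLp.continuous_ofLp 2 _).comp continuous_subtype_val)⟩ with hφ
    have hφmem : φ ∈ SA := ⟨fun z : EuclideanSpace ℝ (Fin m) => z i,
      (EuclideanSpace.proj (𝕜 := ℝ) i).contDiff, fun z => rfl⟩
    exact ⟨⇑φ, ⟨φ, hφmem, rfl⟩, hi⟩
  set ε' : ℝ := ε / (m + 1) with hε'
  have hε'pos : 0 < ε' := by positivity
  have hcomp : ∀ i : Fin m, ∃ H : EuclideanSpace ℝ (Fin m) → ℝ, ContDiff ℝ (⊤ : ℕ∞) H ∧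
      ∀ x ∈ K, |H x - f x i| ≤ ε' := by
    intro i
    have hfi : Continuous fun x : K => f (x : EuclideanSpace ℝ (Fin m)) i :=
      (continuous_apply i).comp ((PiLp.continuous_ofLp 2 _).comp hf.restrict)
    obtain ⟨g, hg⟩ := ContinuousMap.exists_mem_subalgebra_near_continuous_of_separatesPoints
      SA hsep (fun x : K => f (x : EuclideanSpace ℝ (Fin m)) i) hfi ε' hε'pos
    obtain ⟨H, hHsm, hHg⟩ : ∃ H : EuclideanSpace ℝ (Fin m) → ℝ,
        ContDiff ℝ (⊤ : ℕ∞) H ∧ ∀ x : K, (g : C(K,ℝ)) x = H x := g.2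
    refine ⟨H, hHsm, fun x hx => ?_⟩
    have h2 := hg ⟨x, hx⟩
    rw [hHg ⟨x, hx⟩] at h2
    exact le_of_lt h2
  choose Hc hHc1 hHc2 using hcomp
  set H : EuclideanSpace ℝ (Fin m) → EuclideanSpace ℝ (Fin m) :=
    fun z => (EuclideanSpace.equiv (Fin m) ℝ).symm (fun i => Hc i z) with hH
  refine ⟨H, ?_, ?_⟩
  · apply (EuclideanSpace.equiv (Fin m) ℝ).symm.contDiff.comp
    exact contDiff_pi.mpr fun i => hHc1 i
  · intro x hx
    have hcoord : ∀ i, (H x - f x) i = Hc i x - f x i := fun i => rfl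
    have hnorm : ‖H x - f x‖ = Real.sqrt (∑ i, ‖(H x - f x) i‖ ^ 2) :=
      EuclideanSpace.norm_eq _
    have hsum : (∑ i, ‖(H x - f x) i‖ ^ 2) ≤ ε ^ 2 := by
      have hbound : ∀ i : Fin m, ‖(H x - f x) i‖ ^ 2 ≤ ε' ^ 2 := by
        intro i
        rw [hcoord i, Real.norm_eq_abs, ← sq_abs ε']
        apply pow_le_pow_left₀ (abs_nonneg _) _ 2
        rw [abs_of_pos hε'pos]
        exact hHc2 i x hx
      calc (∑ i, ‖(H x - f x) i‖ ^ 2) ≤ ∑ _i : Fin m, ε' ^ 2 :=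
            Finset.sum_le_sum fun i _ => hbound i
        _ = m * ε' ^ 2 := by simp [mul_comm]
        _ ≤ ε ^ 2 := by
            have hm0 : (0:ℝ) ≤ (m:ℝ) := Nat.cast_nonneg m
            rw [hε', div_pow, mul_comm, div_mul_eq_mul_div, div_le_iff₀ (by positivity)]
            have hkey : (0:ℝ) ≤ ε^2 * (((m:ℝ)+1)^2 - (m:ℝ)) :=
              mul_nonneg (sq_nonneg ε) (by nlinarith)
            nlinarith [hkey]
    rw [hnorm]
    calc Real.sqrt (∑ i, ‖(H x - f x) i‖ ^ 2) ≤ Real.sqrt (ε ^ 2) :=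
          Real.sqrt_le_sqrt hsum
      _ = ε := Real.sqrt_sq hε.le

end Approx

/-- **Brouwer fixed point theorem** for the closed unit ball of a Euclidean space. -/
theorem brouwer_unit_ball {m : ℕ} {f : EuclideanSpace ℝ (Fin m) → EuclideanSpace ℝ (Fin m)}
    (hf : ContinuousOn f (closedBall 0 1))
    (hmaps : MapsTo f (closedBall 0 1) (closedBall 0 1)) :
    ∃ x ∈ closedBall (0:EuclideanSpace ℝ (Fin m)) 1, f x = x := by
  by_cases hm : Nontrivial (EuclideanSpace ℝ (Fin m))
  case neg =>
    rw [not_nontrivial_iff_subsingleton] at hm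
    exact ⟨0, mem_closedBall_self zero_le_one, Subsingleton.elim _ _⟩
  haveI := hm
  by_contra hnofix
  push_neg at hnofix
  have hno : ∀ x ∈ closedBall (0:EuclideanSpace ℝ (Fin m)) 1, f x ≠ x := by
    intro x hx
    exact hnofix x hx
  set B : Set (EuclideanSpace ℝ (Fin m)) := closedBall 0 1 with hB
  have hBc : IsCompact B := isCompact_closedBall _ _
  have hBne : B.Nonempty := ⟨0, mem_closedBall_self zero_le_one⟩
  have hcont : ContinuousOn (fun x => ‖x - f x‖) B := (continuousOn_id.sub hf).norm
  obtain ⟨x₀, hx₀, hmin⟩ := hBc.exists_isMinOn hBne hcont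
  set δ : ℝ := ‖x₀ - f x₀‖ with hδ
  have hδpos : 0 < δ := by
    rw [hδ, norm_pos_iff, sub_ne_zero]
    exact fun h => hno x₀ hx₀ h.symm
  have hδle : ∀ x ∈ B, δ ≤ ‖x - f x‖ := fun x hx => hmin hx
  obtain ⟨H, hHsm, hHapp⟩ := exists_smooth_approx hf (show (0:ℝ) < δ/4 by linarith)
  set c : ℝ := (1 + δ/4)⁻¹ with hc
  have hcpos : 0 < c := by rw [hc]; positivity
  have hcle : c ≤ 1 := by
    rw [hc]
    rw [inv_le_one_iff₀]
    right; linarith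
  set G : EuclideanSpace ℝ (Fin m) → EuclideanSpace ℝ (Fin m) := fun x => c • H x with hG
  have hGsm : ContDiff ℝ (⊤ : ℕ∞) G := hHsm.const_smul c
  have hHle : ∀ x ∈ B, ‖H x‖ ≤ 1 + δ/4 := by
    intro x hx
    have h1 : ‖f x‖ ≤ 1 := by simpa [hB, dist_eq_norm] using hmaps hx
    calc ‖H x‖ = ‖H x - f x + f x‖ := by rw [sub_add_cancel]
      _ ≤ ‖H x - f x‖ + ‖f x‖ := norm_add_le _ _
      _ ≤ δ/4 + 1 := add_le_add (hHapp x hx) h1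
      _ = 1 + δ/4 := by ring
  have hGmaps : MapsTo G B B := by
    intro x hx
    have : ‖G x‖ ≤ 1 := by
      rw [hG]
      simp only []
      rw [norm_smul, Real.norm_eq_abs, abs_of_pos hcpos]
      calc c * ‖H x‖ ≤ c * (1 + δ/4) := mul_le_mul_of_nonneg_left (hHle x hx) hcpos.le
        _ = 1 := by rw [hc]; field_simp
    simpa [hB, dist_eq_norm] using this
  have hGH : ∀ x ∈ B, ‖G x - H x‖ ≤ δ/4 := by
    intro x hx
    have h1 : G x - H x = (c - 1) • H x := by rw [hG]; simp [sub_smul]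
    rw [h1, norm_smul, Real.norm_eq_abs, abs_of_nonpos (by linarith)]
    have h2 : 1 - c = (δ/4) * c := by
      have hne : (1 + δ/4) ≠ 0 := by positivity
      rw [hc]
      field_simp
      ring
    rw [neg_sub, h2]
    calc δ/4 * c * ‖H x‖ ≤ δ/4 * c * (1 + δ/4) :=
          mul_le_mul_of_nonneg_left (hHle x hx) (by positivity)
      _ = δ/4 * (c * (1 + δ/4)) := by ring
      _ = δ/4 := by rw [hc]; field_simp
  have hGno : ∀ x ∈ B, G x ≠ x := by
    intro x hx heq
    have h1 : ‖G x - f x‖ ≤ δ/2 := by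
      calc ‖G x - f x‖ ≤ ‖G x - H x‖ + ‖H x - f x‖ := norm_sub_le_norm_sub_add_norm_sub _ _ _
        _ ≤ δ/4 + δ/4 := add_le_add (hGH x hx) (hHapp x hx)
        _ = δ/2 := by ring
    have h2 : δ ≤ ‖G x - f x‖ := by
      rw [heq]
      exact hδle x hx
    linarith [h1, h2, hδpos]
  exact smooth_no_fixed_point_absurd (volume) hGsm hGmaps hGno

/-- Brouwer for closed balls of arbitrary positive radius. -/
theorem brouwer_ball {m : ℕ} {R : ℝ} (hR : 0 < R)
    {f : EuclideanSpace ℝ (Fin m) → EuclideanSpace ℝ (Fin m)}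
    (hf : ContinuousOn f (closedBall 0 R))
    (hmaps : MapsTo f (closedBall 0 R) (closedBall 0 R)) :
    ∃ x ∈ closedBall (0:EuclideanSpace ℝ (Fin m)) R, f x = x := by
  set φ : EuclideanSpace ℝ (Fin m) → EuclideanSpace ℝ (Fin m) :=
    fun x => R⁻¹ • f (R • x) with hφ
  have hsc : ∀ x : EuclideanSpace ℝ (Fin m), x ∈ closedBall (0:EuclideanSpace ℝ (Fin m)) 1 →
      R • x ∈ closedBall (0:EuclideanSpace ℝ (Fin m)) R := by
    intro x hx
    rw [mem_closedBall_zero_iff] at hx ⊢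
    rw [norm_smul, Real.norm_eq_abs, abs_of_pos hR]
    calc R * ‖x‖ ≤ R * 1 := mul_le_mul_of_nonneg_left hx hR.le
      _ = R := mul_one R
  have hφcont : ContinuousOn φ (closedBall 0 1) := by
    refine ContinuousOn.const_smul (g := fun x => f (R • x)) ?_ R⁻¹
    exact hf.comp (continuous_const_smul R).continuousOn hsc
  have hφmaps : MapsTo φ (closedBall 0 1) (closedBall 0 1) := by
    intro x hx
    have h1 : f (R • x) ∈ closedBall (0:EuclideanSpace ℝ (Fin m)) R := hmaps (hsc x hx)
    rw [mem_closedBall_zero_iff] at h1 ⊢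
    rw [hφ]
    simp only []
    rw [norm_smul, Real.norm_eq_abs, abs_of_pos (inv_pos.mpr hR)]
    calc R⁻¹ * ‖f (R • x)‖ ≤ R⁻¹ * R := mul_le_mul_of_nonneg_left h1 (inv_pos.mpr hR).le
      _ = 1 := inv_mul_cancel₀ hR.ne'
  obtain ⟨y, hy, hfix⟩ := brouwer_unit_ball hφcont hφmaps
  refine ⟨R • y, hsc y hy, ?_⟩
  have : R • φ y = R • y := by rw [hfix]
  rw [hφ] at this
  simp only [] at this
  rwa [smul_inv_smul₀ hR.ne'] at this

/-- Brouwer for nonempty compact convex subsets of a Euclidean space. -/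
theorem brouwer_convex_euclid {m : ℕ} {K : Set (EuclideanSpace ℝ (Fin m))}
    (hKc : IsCompact K) (hKconv : Convex ℝ K) (hKne : K.Nonempty)
    {f : EuclideanSpace ℝ (Fin m) → EuclideanSpace ℝ (Fin m)}
    (hf : ContinuousOn f K) (hmaps : MapsTo f K K) : ∃ x ∈ K, f x = x := by
  have hcomplete : IsComplete K := hKc.isComplete
  have hproj : ∀ u : EuclideanSpace ℝ (Fin m), ∃ v, v ∈ K ∧ ‖u - v‖ = ⨅ w : K, ‖u - w‖ := by
    intro u
    obtain ⟨v, hv1, hv2⟩ := exists_norm_eq_iInf_of_complete_convex hKne hcomplete hKconv u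
    exact ⟨v, hv1, hv2⟩
  choose pr hprK hprEq using hproj
  have hprchar : ∀ u, ∀ w ∈ K, ⟪u - pr u, w - pr u⟫ ≤ 0 := fun u =>
    (norm_eq_iInf_iff_real_inner_le_zero hKconv (hprK u)).mp (hprEq u)
  have hprid : ∀ u ∈ K, pr u = u := by
    intro u hu
    have h1 := hprchar u u hu
    have h2 : ⟪u - pr u, u - pr u⟫ = ‖u - pr u‖ ^ 2 := real_inner_self_eq_norm_sq _
    have h3 : ‖u - pr u‖ ^ 2 ≤ 0 := by rw [← h2]; exact h1
    have h4 : ‖u - pr u‖ = 0 := by nlinarith [norm_nonneg (u - pr u)]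
    have := sub_eq_zero.mp (norm_eq_zero.mp h4)
    exact this.symm
  have hprlip : ∀ u v, ‖pr u - pr v‖ ≤ ‖u - v‖ := by
    intro u v
    have h1 := hprchar u (pr v) (hprK v)
    have h2 := hprchar v (pr u) (hprK u)
    have hkey : ‖pr u - pr v‖ ^ 2 ≤ ⟪u - v, pr u - pr v⟫ := by
      have hexp : ⟪u - v, pr u - pr v⟫ - ‖pr u - pr v‖ ^ 2
          = -⟪u - pr u, pr v - pr u⟫ - ⟪v - pr v, pr u - pr v⟫ := by
        rw [← real_inner_self_eq_norm_sq]
        simp only [inner_sub_left, inner_sub_right]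
        linarith [real_inner_comm u (pr u), real_inner_comm u (pr v),
          real_inner_comm v (pr u), real_inner_comm v (pr v),
          real_inner_comm (pr u) (pr v), real_inner_comm u v]
      nlinarith [h1, h2, hexp]
    have hcs := real_inner_le_norm (u - v) (pr u - pr v)
    nlinarith [norm_nonneg (pr u - pr v), norm_nonneg (u - v)]
  have hprcont : Continuous pr := by
    apply LipschitzWith.continuous (K := 1)
    intro a b
    rw [edist_dist, edist_dist, dist_eq_norm, dist_eq_norm]
    have := hprlip a b
    simp only [ENNReal.coe_one, one_mul]
    exact ENNReal.ofReal_le_ofReal this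
  obtain ⟨R₀, hKR₀⟩ := hKc.isBounded.subset_closedBall 0
  set R : ℝ := max R₀ 1 with hRdef
  have hRpos : 0 < R := lt_of_lt_of_le one_pos (le_max_right _ _)
  have hKR : K ⊆ closedBall 0 R :=
    hKR₀.trans (closedBall_subset_closedBall (le_max_left _ _))
  set g : EuclideanSpace ℝ (Fin m) → EuclideanSpace ℝ (Fin m) := fun x => f (pr x) with hgdef
  have hgcont : ContinuousOn g (closedBall 0 R) :=
    hf.comp hprcont.continuousOn (fun x _ => hprK x)
  have hgmaps : MapsTo g (closedBall 0 R) (closedBall 0 R) :=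
    fun x _ => hKR (hmaps (hprK x))
  obtain ⟨x, hxball, hfix⟩ := brouwer_ball hRpos hgcont hgmaps
  have hxK : x ∈ K := by
    rw [← hfix]
    exact hmaps (hprK x)
  refine ⟨x, hxK, ?_⟩
  have hpx : pr x = x := hprid x hxK
  calc f x = f (pr x) := by rw [hpx]
    _ = x := hfix

/-- **Brouwer fixed point theorem** for nonempty compact convex subsets of a
finite-dimensional real normed space. -/
theorem brouwer_convex_compact {V : Type*} [NormedAddCommGroup V] [NormedSpace ℝ V]
    [FiniteDimensional ℝ V] {K : Set V} (hKc : IsCompact K) (hKconv : Convex ℝ K)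
    (hKne : K.Nonempty) {f : V → V} (hf : ContinuousOn f K) (hmaps : MapsTo f K K) :
    ∃ x ∈ K, f x = x := by
  set e : V ≃L[ℝ] EuclideanSpace ℝ (Fin (Module.finrank ℝ V)) := toEuclidean with he
  set K' := e '' K with hK'
  have hK'c : IsCompact K' := hKc.image e.continuous
  have hK'conv : Convex ℝ K' := hKconv.linear_image e.toLinearEquiv.toLinearMap
  have hK'ne : K'.Nonempty := hKne.image e
  set g := fun y => e (f (e.symm y)) with hgdef
  have hgcont : ContinuousOn g K' := by
    apply e.continuous.comp_continuousOn
    apply hf.comp e.symm.continuous.continuousOn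
    rintro y ⟨x, hxK, rfl⟩
    simpa using hxK
  have hgmaps : MapsTo g K' K' := by
    rintro y ⟨x, hxK, rfl⟩
    refine ⟨f x, hmaps hxK, ?_⟩
    simp [hgdef]
  obtain ⟨y, hyK', hfixy⟩ := brouwer_convex_euclid hK'c hK'conv hK'ne hgcont hgmaps
  obtain ⟨x, hxK, rfl⟩ := hyK'
  refine ⟨x, hxK, ?_⟩
  apply e.injective
  simpa [hgdef] using hfixy



end BrouwerMilnor

/-- The cooperative optimization update map has a fixed point: there exist probability
distributions `p i` on the finite sets `X i` such that each `p i` equals the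
normalization of `Ψ i ^ α`, where
`Ψ i xi = Σ_{x : x i = xi} exp (-(E i x)/ℏ) * Π_{j ≠ i} p j (x j)`. -/
theorem cooperative_optimization_fixed_point
    (n : ℕ) (hn : 1 ≤ n) (X : Fin n → Type*)
    [∀ i, Fintype (X i)] [∀ i, Nonempty (X i)] [∀ i, DecidableEq (X i)]
    (E : Fin n → (∀ j, X j) → ℝ) (ℏ α : ℝ) (hℏ : 0 < ℏ) (hα : 0 < α) :
    ∃ p : ∀ i, X i → ℝ,
      (∀ i, (∀ xi, 0 ≤ p i xi) ∧ ∑ xi, p i xi = 1) ∧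
      (∀ i (xi : X i),
        p i xi =
          (∑ x ∈ Finset.univ.filter (fun x : ∀ j, X j => x i = xi),
              Real.exp (-(E i x) / ℏ) * ∏ j ∈ Finset.univ.erase i, p j (x j)) ^ α /
          ∑ yi : X i,
            (∑ x ∈ Finset.univ.filter (fun x : ∀ j, X j => x i = yi),
              Real.exp (-(E i x) / ℏ) * ∏ j ∈ Finset.univ.erase i, p j (x j)) ^ α) := by
  classical
  set K : Set (∀ i, X i → ℝ) := {p | ∀ i, (∀ xi, 0 ≤ p i xi) ∧ ∑ xi, p i xi = 1} with hK
  set Ψ : (∀ i, X i → ℝ) → ∀ i, X i → ℝ := fun p i xi =>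
    ∑ x ∈ Finset.univ.filter (fun x : ∀ j, X j => x i = xi),
      Real.exp (-(E i x) / ℏ) * ∏ j ∈ Finset.univ.erase i, p j (x j) with hΨ
  set T : (∀ i, X i → ℝ) → ∀ i, X i → ℝ :=
    fun p i xi => (Ψ p i xi) ^ α / ∑ yi, (Ψ p i yi) ^ α with hT
  -- K is convex
  have hKconv : Convex ℝ K := by
    intro p hp q hq a b ha hb hab
    intro i
    constructor
    · intro xi
      have h1 := (hp i).1 xi
      have h2 := (hq i).1 xi
      simp only [Pi.add_apply, Pi.smul_apply, smul_eq_mul]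
      positivity
    · have h1 := (hp i).2
      have h2 := (hq i).2
      simp only [Pi.add_apply, Pi.smul_apply, smul_eq_mul]
      rw [Finset.sum_add_distrib, ← Finset.mul_sum, ← Finset.mul_sum, h1, h2]
      simpa using hab
  -- K is compact
  have hKclosed : IsClosed K := by
    have : K = (⋂ i, ⋂ xi, {p : ∀ i, X i → ℝ | 0 ≤ p i xi}) ∩
        (⋂ i, {p : ∀ i, X i → ℝ | ∑ xi, p i xi = 1}) := by
      ext p
      simp only [Set.mem_inter_iff, Set.mem_iInter, Set.mem_setOf_eq, hK]
      constructor
      · exact fun h => ⟨fun i xi => (h i).1 xi, fun i => (h i).2⟩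
      · exact fun h i => ⟨fun xi => h.1 i xi, h.2 i⟩
    rw [this]
    apply IsClosed.inter
    · exact isClosed_iInter fun i => isClosed_iInter fun xi =>
        isClosed_le continuous_const ((continuous_apply xi).comp (continuous_apply i))
    · exact isClosed_iInter fun i => isClosed_eq
        (continuous_finset_sum _ fun xi _ => (continuous_apply xi).comp (continuous_apply i))
        continuous_const
  have hKbdd : K ⊆ Metric.closedBall 0 1 := by
    intro p hp
    rw [mem_closedBall_zero_iff]
    rw [pi_norm_le_iff_of_nonneg zero_le_one]
    intro i
    rw [pi_norm_le_iff_of_nonneg zero_le_one]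
    intro xi
    rw [Real.norm_eq_abs, abs_of_nonneg ((hp i).1 xi)]
    calc p i xi ≤ ∑ yi, p i yi :=
          Finset.single_le_sum (fun yi _ => (hp i).1 yi) (Finset.mem_univ xi)
      _ = 1 := (hp i).2
  have hKcomp : IsCompact K :=
    Metric.isCompact_of_isClosed_isBounded hKclosed
      ((Metric.isBounded_closedBall).subset hKbdd)
  -- K is nonempty
  have hKne : K.Nonempty := by
    refine ⟨fun i _ => (Fintype.card (X i) : ℝ)⁻¹, fun i => ⟨fun xi => by positivity, ?_⟩⟩
    have hcard : 0 < Fintype.card (X i) := Fintype.card_pos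
    rw [Finset.sum_const, Finset.card_univ, nsmul_eq_mul]
    rw [mul_inv_cancel₀]
    exact_mod_cast hcard.ne'
  -- positivity of Ψ on K
  have hΨpos : ∀ p ∈ K, ∀ i xi, 0 < Ψ p i xi := by
    intro p hp i xi
    have hexists : ∀ j, ∃ xj : X j, 0 < p j xj := by
      intro j
      by_contra hcon
      push_neg at hcon
      have : ∀ xj, p j xj = 0 := fun xj => le_antisymm (hcon xj) ((hp j).1 xj)
      have hsum := (hp j).2
      rw [Finset.sum_congr rfl (fun xj _ => this xj), Finset.sum_const_zero] at hsum
      norm_num at hsum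
    choose y hy using hexists
    set x' : ∀ j, X j := Function.update y i xi with hx'
    apply Finset.sum_pos'
    · intro x hx
      apply mul_nonneg (Real.exp_nonneg _)
      exact Finset.prod_nonneg fun j _ => (hp j).1 (x j)
    · refine ⟨x', Finset.mem_filter.mpr ⟨Finset.mem_univ _, Function.update_self i xi y⟩, ?_⟩
      apply mul_pos (Real.exp_pos _)
      apply Finset.prod_pos
      intro j hj
      have hji : j ≠ i := Finset.ne_of_mem_erase hj
      rw [hx', Function.update_of_ne hji]
      exact hy j
  -- continuity of Ψ components
  have hΨcont : ∀ i xi, Continuous fun p => Ψ p i xi := by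
    intro i xi
    apply continuous_finset_sum
    intro x _
    exact continuous_const.mul
      (continuous_finset_prod _ fun j _ => (continuous_apply (x j)).comp (continuous_apply j))
  -- denominators positive on K
  have hden : ∀ p ∈ K, ∀ i, 0 < ∑ yi, (Ψ p i yi) ^ α := by
    intro p hp i
    apply Finset.sum_pos
    · intro yi _
      exact Real.rpow_pos_of_pos (hΨpos p hp i yi) α
    · exact Finset.univ_nonempty
  -- T is continuous on K
  have hTcont : ContinuousOn T K := by
    apply continuousOn_pi.mpr
    intro i
    apply continuousOn_pi.mpr
    intro xi
    intro p hp
    apply ContinuousAt.continuousWithinAt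
    have hrp : ∀ yi : X i, ContinuousAt (fun q : ∀ i, X i → ℝ => (Ψ q i yi) ^ α) p := by
      intro yi
      have h1 : ContinuousAt (fun q : ∀ i, X i → ℝ => Ψ q i yi) p := (hΨcont i yi).continuousAt
      exact h1.rpow_const (Or.inl (hΨpos p hp i yi).ne')
    have hnum : ContinuousAt (fun q : ∀ i, X i → ℝ => (Ψ q i xi) ^ α) p := hrp xi
    have hdenc : ContinuousAt (fun q : ∀ i, X i → ℝ => ∑ yi, (Ψ q i yi) ^ α) p := by
      apply tendsto_finset_sum
      intro yi _
      exact hrp yi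
    exact hnum.div hdenc (hden p hp i).ne'
  -- T maps K to K
  have hTmaps : Set.MapsTo T K K := by
    intro p hp
    intro i
    constructor
    · intro xi
      apply div_nonneg
      · exact Real.rpow_nonneg (hΨpos p hp i xi).le α
      · exact (hden p hp i).le
    · rw [← Finset.sum_div]
      exact div_self (hden p hp i).ne'
  obtain ⟨p, hpK, hpfix⟩ := BrouwerMilnor.brouwer_convex_compact hKcomp hKconv hKne hTcont hTmaps
  refine ⟨p, hpK, ?_⟩
  intro i xi
  conv_lhs => rw [← hpfix]
end

section
/- Suppose the Hermitian matrix H has a unique smallest eigenvalue e₁ (with eigenvector φ₁ in an orthonormal eigenbasis) and ψ(0) = Σⱼ cⱼφⱼ with c₁ ≠ 0. Then the normalized dual evolution ψ(t)/‖ψ(t)‖, where ψ(t) = exp(-(1/ℏ)tH)ψ(0), converges as t → ∞ to (c₁/|c₁|)·φ₁, the normalized ground state. -/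
/-!
In the eigenbasis, `ψ t = ∑ j, exp (-(t / ℏ) * e j) • c j • φ j`. Factoring out the scalar
`exp (-(t / ℏ) * e 0)`, which normalization ignores, leaves
`∑ j, exp (-(t / ℏ) * (e j - e 0)) • c j • φ j`; by the spectral gap every term with `j ≠ 0`
decays, so this tends to `c 0 • φ 0 ≠ 0`, and the normalized vectors tend to its normalization.
-/

open Filter Topology Matrix

-- Any norm on matrices will do: it only serves to sum the exponential series.
open scoped Matrix.Norms.Operator in
theorem Matrix.exp_mulVec_of_mulVec_eq_smul {n 𝕜 : Type*} [Fintype n] [DecidableEq n] [RCLike 𝕜]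
    {A : Matrix n n 𝕜} {a : 𝕜} {v : n → 𝕜} (h : A *ᵥ v = a • v) :
    NormedSpace.exp A *ᵥ v = NormedSpace.exp a • v := by
  have hpow (k : ℕ) : A ^ k *ᵥ v = a ^ k • v := by
    induction k with
    | zero => simp
    | succ k ih => rw [pow_succ', ← Matrix.mulVec_mulVec, ih, Matrix.mulVec_smul, h, smul_smul,
        pow_succ]
  have hA := (NormedSpace.exp_series_hasSum_exp' (𝕂 := 𝕜) A).map
    (Matrix.mulVec.addMonoidHomLeft v) (continuous_id.matrix_mulVec continuous_const)
  have ha := (NormedSpace.exp_series_hasSum_exp' (𝕂 := 𝕜) a).smul_const v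
  refine hA.unique (ha.congr_fun fun k => ?_)
  simp [Matrix.mulVec.addMonoidHomLeft, Matrix.smul_mulVec, hpow, smul_smul]

theorem tendsto_sum_exp_neg_mul_sub_smul {ι E : Type*} [Fintype ι] [DecidableEq ι]
    [AddCommGroup E] [TopologicalSpace E] [IsTopologicalAddGroup E] [Module ℝ E]
    [ContinuousSMul ℝ E] {e : ι → ℝ} {i : ι} (hgap : ∀ j ≠ i, e i < e j) (v : ι → E) :
    Tendsto (fun s : ℝ => ∑ j, Real.exp (-(s * (e j - e i))) • v j) atTop (𝓝 (v i)) := by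
  have hweight (j : ι) : Tendsto (fun s : ℝ => Real.exp (-(s * (e j - e i)))) atTop
      (𝓝 (if j = i then 1 else 0)) := by
    split_ifs with hj
    · simp [hj]
    · exact Real.tendsto_exp_neg_atTop_nhds_zero.comp
        (tendsto_id.atTop_mul_const (sub_pos.2 (hgap j hj)))
  simpa using tendsto_finsetSum Finset.univ fun j _ => (hweight j).smul_const (v j)

theorem norm_inv_smul_smul_of_pos {E : Type*} [NormedAddCommGroup E] [NormedSpace ℝ E]
    {r : ℝ} (hr : 0 < r) (x : E) : ‖r • x‖⁻¹ • r • x = ‖x‖⁻¹ • x := by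
  rw [norm_smul, Real.norm_of_nonneg hr.le, mul_inv, smul_smul, mul_right_comm,
    inv_mul_cancel₀ hr.ne', one_mul]

theorem Filter.Tendsto.norm_inv_smul {α E : Type*} [NormedAddCommGroup E] [NormedSpace ℝ E]
    {l : Filter α} {f : α → E} {x : E} (h : Tendsto f l (𝓝 x)) (hx : x ≠ 0) :
    Tendsto (fun a => ‖f a‖⁻¹ • f a) l (𝓝 (‖x‖⁻¹ • x)) :=
  (h.norm.inv₀ (norm_ne_zero_iff.2 hx)).smul h

theorem dual_evolution_tendsto_ground_state_general
    (N : ℕ) (hN : 0 < N) (H : Matrix (Fin N) (Fin N) ℂ)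
    (ℏ : ℝ) (hℏ : 0 < ℏ)
    (φ : Fin N → EuclideanSpace ℂ (Fin N)) (hON : Orthonormal ℂ φ)
    (e : Fin N → ℝ) (heig : ∀ j, H.mulVec (φ j) = (e j : ℂ) • φ j)
    (hgap : ∀ j : Fin N, j ≠ ⟨0, hN⟩ → e ⟨0, hN⟩ < e j)
    (c : Fin N → ℂ) (hc : c ⟨0, hN⟩ ≠ 0)
    (ψ0 : EuclideanSpace ℂ (Fin N)) (hψ0 : ψ0 = ∑ j, c j • φ j)
    (ψ : ℝ → EuclideanSpace ℂ (Fin N))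
    (hψ : ∀ t, ψ t = Matrix.toEuclideanCLM (𝕜 := ℂ)
        (NormedSpace.exp (((-(t / ℏ) : ℝ) : ℂ) • H)) ψ0) :
    Tendsto (fun t : ℝ => (‖ψ t‖⁻¹ : ℝ) • ψ t) atTop
      (nhds ((c ⟨0, hN⟩ / ((‖c ⟨0, hN⟩‖ : ℝ) : ℂ)) • φ ⟨0, hN⟩)) := by
  set i₀ : Fin N := ⟨0, hN⟩
  have hexp_eigen (s : ℝ) (j : Fin N) :
      Matrix.toEuclideanCLM (𝕜 := ℂ) (NormedSpace.exp (((-s : ℝ) : ℂ) • H)) (φ j) =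
        Real.exp (-(s * e j)) • φ j := by
    have h : (((-s : ℝ) : ℂ) • H) *ᵥ φ j = (((-(s * e j)) : ℝ) : ℂ) • φ j := by
      rw [Matrix.smul_mulVec, heig, smul_smul]; push_cast; ring_nf
    apply WithLp.ofLp_injective
    rw [Matrix.ofLp_toEuclideanCLM, Matrix.exp_mulVec_of_mulVec_eq_smul h, WithLp.ofLp_smul,
      ← Complex.exp_eq_exp_ℂ, ← Complex.ofReal_exp, Complex.coe_smul]
  set u : ℝ → EuclideanSpace ℂ (Fin N) := fun s => ∑ j, Real.exp (-(s * (e j - e i₀))) • c j • φ j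
  have hψ_eq (t : ℝ) : ψ t = Real.exp (-(t / ℏ * e i₀)) • u (t / ℏ) := by
    rw [hψ t, hψ0, map_sum, Finset.smul_sum]
    refine Finset.sum_congr rfl fun j _ => ?_
    rw [map_smul, hexp_eigen, smul_comm, smul_smul, ← Real.exp_add]
    ring_nf
  have hu : Tendsto u atTop (𝓝 (c i₀ • φ i₀)) := tendsto_sum_exp_neg_mul_sub_smul hgap _
  have hlim := (hu.comp (tendsto_id.atTop_div_const hℏ)).norm_inv_smul
    (smul_ne_zero hc (hON.ne_zero i₀))
  have hground : ‖c i₀ • φ i₀‖⁻¹ • c i₀ • φ i₀ = (c i₀ / ((‖c i₀‖ : ℝ) : ℂ)) • φ i₀ := by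
    rw [norm_smul, hON.1 i₀, mul_one, ← Complex.coe_smul, smul_smul, div_eq_inv_mul,
      Complex.ofReal_inv]
  rw [← hground]
  refine hlim.congr fun t => ?_
  rw [Function.comp_apply, id, hψ_eq, norm_inv_smul_smul_of_pos (Real.exp_pos _)]

/-- If the Hermitian matrix `H` has a unique smallest eigenvalue `e 0` with eigenvector
`φ 0` in an orthonormal eigenbasis, and `ψ(0) = Σ j, c j • φ j` with `c 0 ≠ 0`, then the
normalized dual evolution `ψ(t)/‖ψ(t)‖` with `ψ(t) = exp (-(1/ℏ) t H) ψ(0)` converges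
as `t → ∞` to `(c 0 / |c 0|) • φ 0`, the normalized ground state. -/
theorem dual_evolution_tendsto_ground_state
    (N : ℕ) (hN : 0 < N) (H : Matrix (Fin N) (Fin N) ℂ) (hH : H.IsHermitian)
    (ℏ : ℝ) (hℏ : 0 < ℏ)
    (φ : Fin N → EuclideanSpace ℂ (Fin N)) (hON : Orthonormal ℂ φ)
    (e : Fin N → ℝ) (heig : ∀ j, H.mulVec (φ j) = (e j : ℂ) • φ j)
    (hmono : Monotone e)
    (hgap : ∀ j : Fin N, j ≠ ⟨0, hN⟩ → e ⟨0, hN⟩ < e j)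
    (c : Fin N → ℂ) (hc : c ⟨0, hN⟩ ≠ 0)
    (ψ0 : EuclideanSpace ℂ (Fin N)) (hψ0 : ψ0 = ∑ j, c j • φ j)
    (ψ : ℝ → EuclideanSpace ℂ (Fin N))
    (hψ : ∀ t, ψ t = Matrix.toEuclideanCLM (𝕜 := ℂ)
        (NormedSpace.exp (((-(t / ℏ) : ℝ) : ℂ) • H)) ψ0) :
    Tendsto (fun t : ℝ => (‖ψ t‖⁻¹ : ℝ) • ψ t) atTop
      (nhds ((c ⟨0, hN⟩ / ((‖c ⟨0, hN⟩‖ : ℝ) : ℂ)) • φ ⟨0, hN⟩)) :=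
  dual_evolution_tendsto_ground_state_general N hN H ℏ hℏ φ hON e heig hgap c hc ψ0 hψ0 ψ hψ
end
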